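/- For any two finite simple graphs G0 and G1, if l_EF(G0,G1) ≥ 4·λ(G0) + 4, then λ(G1) ≤ λ(G0). -/

import Mathlib

open SimpleGraph FirstOrder

namespace SymPaper

/-! ### The symmetry breaking-preserving game `Sym(G)`

Two players A and B alternately color previously uncolored edges of `G` (A red, B blue),
A moving first.  A strategy is a function of the opponent-visible history as in the paper:
A's move is a function of B's previous moves, B's move is a function of A's moves so far. -/

variable {V : Type*}

/-- `rounds S1 S2 n` is the list of pairs (A's edge, B's edge) of the first `n` rounds,
when A follows `S1` and B follows `S2`:
`a i = S1 (b 1, …, b (i-1))` and `b i = S2 (a 1, …, a i)`. -/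
def rounds (S1 S2 : List (Sym2 V) → Sym2 V) : ℕ → List (Sym2 V × Sym2 V)
  | 0 => []
  | n + 1 =>
    let prev := rounds S1 S2 n
    let a := S1 (prev.map Prod.snd)
    let b := S2 (prev.map Prod.fst ++ [a])
    prev ++ [(a, b)]

/-- The subgraph (of the ambient vertex set) formed by a list of edges. -/
def graphOf (L : List (Sym2 V)) : SimpleGraph V :=
  SimpleGraph.fromEdgeSet {e | e ∈ L}

/-- The red and the blue subgraphs are isomorphic after round `i`. -/
def isoAt (S1 S2 : List (Sym2 V) → Sym2 V) (i : ℕ) : Prop :=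
  Nonempty (graphOf ((rounds S1 S2 i).map Prod.fst) ≃g graphOf ((rounds S1 S2 i).map Prod.snd))

/-- A strategy for player A: a function mapping every sequence of pairwise distinct
edges to an edge different from them and from all of its own values on prefixes
(required whenever such a fresh edge exists, i.e. `2·i + 1 ≤ |E(G)|`). -/
structure AStrategy (G : SimpleGraph V) where
  move : List (Sym2 V) → Sym2 V
  valid : ∀ L : List (Sym2 V), L.Nodup → (∀ e ∈ L, e ∈ G.edgeSet) →
    2 * L.length + 1 ≤ G.edgeSet.ncard →
    move L ∈ G.edgeSet ∧ move L ∉ L ∧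
      ∀ L' : List (Sym2 V), L' <+: L → L' ≠ L → move L' ≠ move L

/-- A strategy for player B: defined analogously on nonempty sequences. -/
structure BStrategy (G : SimpleGraph V) where
  move : List (Sym2 V) → Sym2 V
  valid : ∀ L : List (Sym2 V), L ≠ [] → L.Nodup → (∀ e ∈ L, e ∈ G.edgeSet) →
    2 * L.length ≤ G.edgeSet.ncard →
    move L ∈ G.edgeSet ∧ move L ∉ L ∧
      ∀ L' : List (Sym2 V), L' ≠ [] → L' <+: L → L' ≠ L → move L' ≠ move L

/-- `l(S1,S2)`: the maximum `l` (at most the total number `⌊|E(G)|/2⌋` of rounds)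
such that the red and blue subgraphs are isomorphic after every round `i ≤ l`. -/
noncomputable def playLength (G : SimpleGraph V) (S1 S2 : List (Sym2 V) → Sym2 V) : ℕ :=
  sSup {l : ℕ | l ≤ G.edgeSet.ncard / 2 ∧ ∀ i ≤ l, isoAt S1 S2 i}

/-- `λ(G) = max_{S2} min_{S1} l(S1,S2)`, the length of the game `Sym(G)`. -/
noncomputable def symLen (G : SimpleGraph V) : ℕ :=
  ⨆ S2 : BStrategy G, ⨅ S1 : AStrategy G, playLength G S1.move S2.move

/-- `λ̃(G) = min_{S1} max_{S2} l(S1,S2)`. -/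
noncomputable def symLenTilde (G : SimpleGraph V) : ℕ :=
  ⨅ S1 : AStrategy G, ⨆ S2 : BStrategy G, playLength G S1.move S2.move

/-! ### The Ehrenfeucht–Fraïssé game `EF(G0,G1)`

Vertex-disjointness is modelled by taking two different vertex types.  In each round the
spoiler (player A) picks a vertex of either graph and the duplicator (player B) answers with
a vertex of the other graph, so each round produces a pair in `V0 × V1`. -/

variable {V0 V1 : Type*}

/-- A duplicator strategy: given the history of pairs and the spoiler's pick
(a vertex of `G0` or of `G1`), produce the pair for this round; the spoiler's pick
must be the corresponding component of the pair. -/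
structure DStrategy (V0 V1 : Type*) where
  resp : List (V0 × V1) → V0 ⊕ V1 → V0 × V1
  resp_left : ∀ L u, (resp L (Sum.inl u)).1 = u
  resp_right : ∀ L w, (resp L (Sum.inr w)).2 = w

/-- The list of pairs of vertices chosen in the first `n` rounds when the duplicator
follows `D` and the spoiler follows `σ`. -/
def efRounds (D : DStrategy V0 V1) (σ : List (V0 × V1) → V0 ⊕ V1) : ℕ → List (V0 × V1)
  | 0 => []
  | n + 1 =>
    let prev := efRounds D σ n
    prev ++ [D.resp prev (σ prev)]

/-- The chosen pairs form a partial isomorphism between `G0` and `G1`, i.e.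
an isomorphism between the subgraphs induced by the chosen vertices. -/
def PartialIso (G0 : SimpleGraph V0) (G1 : SimpleGraph V1) (L : List (V0 × V1)) : Prop :=
  ∀ p ∈ L, ∀ q ∈ L, (p.1 = q.1 ↔ p.2 = q.2) ∧ (G0.Adj p.1 q.1 ↔ G1.Adj p.2 q.2)

/-- The duplicator can survive `k` rounds of `EF(G0,G1)` whatever the spoiler does. -/
def DuplicatorWins (G0 : SimpleGraph V0) (G1 : SimpleGraph V1) (k : ℕ) : Prop :=
  ∃ D : DStrategy V0 V1, ∀ σ : List (V0 × V1) → V0 ⊕ V1, PartialIso G0 G1 (efRounds D σ k)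

/-- `l_EF(G0,G1)`: the maximum number of rounds during which the duplicator, playing
optimally, survives irrespective of the spoiler's strategy (possibly `⊤`). -/
noncomputable def lEF (G0 : SimpleGraph V0) (G1 : SimpleGraph V1) : ℕ∞ :=
  sSup {k : ℕ∞ | ∃ m : ℕ, DuplicatorWins G0 G1 m ∧ k = (m : ℕ∞)}

/-- The canonical embedding of `ℕ∞` into the extended reals. -/
noncomputable def enatToEReal : ℕ∞ → EReal
  | none => ⊤
  | some m => ((m : ℝ) : EReal)

/-! ### Line graphs, paths, cycles -/

/-- The line graph `L(G)`: vertices are the edges of `G`, two of them adjacent iff they are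
distinct and share a vertex of `G`. -/
def lineG (G : SimpleGraph V) : SimpleGraph G.edgeSet where
  Adj e f := e ≠ f ∧ ∃ v : V, v ∈ (e : Sym2 V) ∧ v ∈ (f : Sym2 V)
  symm := by
    constructor
    rintro e f ⟨hne, v, hv, hw⟩
    exact ⟨hne.symm, v, hw, hv⟩
  loopless := by
    constructor
    rintro e ⟨hne, -⟩
    exact hne rfl

/-- `P n`: the path with `n` edges (on `n+1` vertices). -/
abbrev pathG (n : ℕ) : SimpleGraph (Fin (n + 1)) := SimpleGraph.pathGraph (n + 1)

/-- `C n`: the cycle with `n` edges (on `n` vertices); meaningful for `n ≥ 3`. -/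
abbrev cycleG (n : ℕ) : SimpleGraph (Fin n) := SimpleGraph.cycleGraph n

/-! ### Counting quantifiers of first-order formulas -/

/-- The number of quantifier occurrences in a first-order formula. -/
def quantCount {L : Language} {α : Type*} : ∀ {n : ℕ}, L.BoundedFormula α n → ℕ
  | _, .falsum => 0
  | _, .equal _ _ => 0
  | _, .rel _ _ => 0
  | _, .imp f g => quantCount f + quantCount g
  | _, .all f => quantCount f + 1



/-! ### Auxiliary machinery -/

section Aux1
variable {V : Type*}
lemma mk_out (e : Sym2 V) : s(e.out.1, e.out.2) = e := by
  rw [Sym2.mk]; exact e.out_eq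

lemma adj_out {G : SimpleGraph V} {e : Sym2 V} (h : e ∈ G.edgeSet) :
    G.Adj e.out.1 e.out.2 := by
  rw [← SimpleGraph.mem_edgeSet, mk_out]; exact h

lemma isoAt_zero (S1 S2 : List (Sym2 V) → Sym2 V) : isoAt S1 S2 0 :=
  ⟨⟨Equiv.refl V, Iff.rfl⟩⟩

lemma zero_mem_playSet (G : SimpleGraph V) (S1 S2 : List (Sym2 V) → Sym2 V) :
    0 ∈ {l : ℕ | l ≤ G.edgeSet.ncard / 2 ∧ ∀ i ≤ l, isoAt S1 S2 i} :=
  ⟨Nat.zero_le _, fun i hi => by simp only [Nat.le_zero] at hi; subst hi; exact isoAt_zero _ _⟩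

lemma playLength_le_half (G : SimpleGraph V) (S1 S2 : List (Sym2 V) → Sym2 V) :
    playLength G S1 S2 ≤ G.edgeSet.ncard / 2 :=
  csSup_le ⟨0, zero_mem_playSet G S1 S2⟩ fun _ hb => hb.1

lemma le_playLength {G : SimpleGraph V} {S1 S2 : List (Sym2 V) → Sym2 V} {l : ℕ}
    (h1 : l ≤ G.edgeSet.ncard / 2) (h2 : ∀ i ≤ l, isoAt S1 S2 i) :
    l ≤ playLength G S1 S2 :=
  le_csSup ⟨G.edgeSet.ncard / 2, fun _ hb => hb.1⟩ ⟨h1, h2⟩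

lemma isoAt_of_le_playLength {G : SimpleGraph V} {S1 S2 : List (Sym2 V) → Sym2 V} {k : ℕ}
    (h : k ≤ playLength G S1 S2) : ∀ i ≤ k, isoAt S1 S2 i := by
  have hmem : playLength G S1 S2 ∈ {l : ℕ | l ≤ G.edgeSet.ncard / 2 ∧ ∀ i ≤ l, isoAt S1 S2 i} :=
    Nat.sSup_mem ⟨0, zero_mem_playSet G S1 S2⟩ ⟨G.edgeSet.ncard / 2, fun _ hb => hb.1⟩
  exact fun i hi => hmem.2 i (hi.trans h)

lemma rounds_length (S1 S2 : List (Sym2 V) → Sym2 V) (n : ℕ) :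
    (rounds S1 S2 n).length = n := by
  induction n with
  | zero => rfl
  | succ n ih => simp [rounds, ih]

instance [Nonempty V] : Nonempty (Sym2 V) :=
  ⟨s(Classical.ofNonempty, Classical.ofNonempty)⟩

variable [Fintype V] [Nonempty V]

open Classical in
noncomputable def patched (G : SimpleGraph V) (s : ℕ) (cand : List (Sym2 V) → Sym2 V) :
    List (Sym2 V) → Sym2 V := fun L =>
  let prev : List (Sym2 V) :=
    (List.range' s (L.length - s)).attach.map (fun k => patched G s cand (L.take k.1))
  if cand L ∈ G.edgeSet ∧ cand L ∉ L ∧ cand L ∉ prev then cand L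
  else if h : (G.edgeSet \ ({e | e ∈ prev} ∪ {e | e ∈ L})).Nonempty then h.choose
  else Classical.ofNonempty
termination_by L => L.length
decreasing_by
  have := k.2
  simp only [List.mem_range'] at this
  obtain ⟨i, hi, hk⟩ := this
  simp only [List.length_take]
  omega

lemma patched_spec (G : SimpleGraph V) (s : ℕ) (cand : List (Sym2 V) → Sym2 V)
    (L : List (Sym2 V)) (hsL : s ≤ L.length)
    (hne : 2 * L.length - s < G.edgeSet.ncard) (hL : ∀ e ∈ L, e ∈ G.edgeSet) :
    patched G s cand L ∈ G.edgeSet ∧ patched G s cand L ∉ L ∧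
      ∀ k, s ≤ k → k < L.length → patched G s cand (L.take k) ≠ patched G s cand L := by
  classical
  rw [patched]
  set prev : List (Sym2 V) :=
    (List.range' s (L.length - s)).attach.map (fun k => patched G s cand (L.take k.1)) with hprev
  have hmem : ∀ k, s ≤ k → k < L.length → patched G s cand (L.take k) ∈ prev := by
    intro k h1 h2
    rw [hprev]
    simp only [List.mem_map, List.mem_attach, true_and, Subtype.exists]
    exact ⟨k, by simp only [List.mem_range']; exact ⟨k - s, by omega, by omega⟩, rfl⟩
  have hex : (G.edgeSet \ ({e | e ∈ prev} ∪ {e | e ∈ L})).Nonempty := by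
    by_contra hemp
    rw [Set.not_nonempty_iff_eq_empty, Set.diff_eq_empty] at hemp
    have hfin : (({e | e ∈ prev} ∪ {e | e ∈ L} : Set (Sym2 V))).Finite := by
      apply Set.Finite.union
      · exact prev.toFinset.finite_toSet.subset (by intro e he; simpa using he)
      · exact L.toFinset.finite_toSet.subset (by intro e he; simpa using he)
    have h1 : G.edgeSet.ncard ≤ ({e | e ∈ prev} ∪ {e | e ∈ L} : Set (Sym2 V)).ncard :=
      Set.ncard_le_ncard hemp hfin
    have h2 : ({e | e ∈ prev} ∪ {e | e ∈ L} : Set (Sym2 V)).ncard ≤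
        ({e | e ∈ prev} : Set (Sym2 V)).ncard + ({e | e ∈ L} : Set (Sym2 V)).ncard :=
      Set.ncard_union_le _ _
    have h3 : ({e | e ∈ prev} : Set (Sym2 V)).ncard ≤ prev.length := by
      have : ({e | e ∈ prev} : Set (Sym2 V)) = ↑prev.toFinset := by ext e; simp
      rw [this, Set.ncard_coe_finset]
      exact List.toFinset_card_le prev
    have h4 : ({e | e ∈ L} : Set (Sym2 V)).ncard ≤ L.length := by
      have : ({e | e ∈ L} : Set (Sym2 V)) = ↑L.toFinset := by ext e; simp
      rw [this, Set.ncard_coe_finset]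
      exact List.toFinset_card_le L
    have h5 : prev.length ≤ L.length - s := by
      rw [hprev]; simp
    omega
  split_ifs with hc
  · exact ⟨hc.1, hc.2.1, fun k h1 h2 heq => hc.2.2 (heq ▸ hmem k h1 h2)⟩
  · have := hex.choose_spec
    exact ⟨this.1, fun hc' => this.2 (Or.inr hc'),
      fun k h1 h2 heq => this.2 (Or.inl (heq ▸ hmem k h1 h2))⟩


lemma patched_eq_cand {G : SimpleGraph V} {s : ℕ} {cand : List (Sym2 V) → Sym2 V}
    {L : List (Sym2 V)}
    (h1 : cand L ∈ G.edgeSet) (h2 : cand L ∉ L)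
    (h3 : ∀ k, s ≤ k → k < L.length → patched G s cand (L.take k) ≠ cand L) :
    patched G s cand L = cand L := by
  rw [patched, if_pos]
  refine ⟨h1, h2, ?_⟩
  simp only [List.mem_map, List.mem_attach, true_and, Subtype.exists, List.mem_range']
  rintro ⟨k, ⟨i, hi, rfl⟩, hk⟩
  exact h3 _ (by omega) (by omega) hk

lemma prefix_proper_length {α : Type*} {L' L : List α} (h : L' <+: L) (hne : L' ≠ L) :
    L'.length < L.length := by
  rcases lt_or_eq_of_le h.length_le with h' | h'
  · exact h'
  · exact absurd (List.prefix_iff_eq_take.mp h ▸ by rw [h', List.take_length]) hne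

noncomputable def mkA (G : SimpleGraph V) (cand : List (Sym2 V) → Sym2 V) : AStrategy G where
  move := patched G 0 cand
  valid := by
    intro L hnd hLE hcard
    obtain ⟨m1, m2, m3⟩ := patched_spec G 0 cand L (Nat.zero_le _) (by omega) hLE
    refine ⟨m1, m2, fun L' hpre hne heq => ?_⟩
    refine m3 L'.length (Nat.zero_le _) (prefix_proper_length hpre hne) ?_
    rw [← List.prefix_iff_eq_take.mp hpre]; exact heq

noncomputable def mkB (G : SimpleGraph V) (cand : List (Sym2 V) → Sym2 V) : BStrategy G where
  move := patched G 1 cand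
  valid := by
    intro L hne0 hnd hLE hcard
    have hlen : 1 ≤ L.length := List.length_pos_iff.mpr hne0
    obtain ⟨m1, m2, m3⟩ := patched_spec G 1 cand L hlen (by omega) hLE
    refine ⟨m1, m2, fun L' hne' hpre hneq heq => ?_⟩
    refine m3 L'.length (List.length_pos_iff.mpr hne') (prefix_proper_length hpre hneq) ?_
    rw [← List.prefix_iff_eq_take.mp hpre]; exact heq

instance (G : SimpleGraph V) : Nonempty (AStrategy G) :=
  ⟨mkA G fun _ => Classical.ofNonempty⟩
instance (G : SimpleGraph V) : Nonempty (BStrategy G) :=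
  ⟨mkB G fun _ => Classical.ofNonempty⟩


end Aux1

section Aux2
variable {V0 V1 : Type*}
lemma efRounds_length (D : DStrategy V0 V1) (σ : List (V0 × V1) → V0 ⊕ V1) (n : ℕ) :
    (efRounds D σ n).length = n := by
  induction n with
  | zero => rfl
  | succ n ih => simp [efRounds, ih]

lemma efRounds_prefix (D : DStrategy V0 V1) (σ : List (V0 × V1) → V0 ⊕ V1) {m n : ℕ}
    (h : m ≤ n) : efRounds D σ m <+: efRounds D σ n := by
  induction n with
  | zero => simp only [Nat.le_zero] at h; subst h; exact List.prefix_refl _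
  | succ n ih =>
    rcases Nat.lt_or_ge m (n+1) with h' | h'
    · exact (ih (by omega)).trans ⟨_, rfl⟩
    · have : m = n + 1 := by omega
      subst this; exact List.prefix_refl _

lemma partialIso_mono {G0 : SimpleGraph V0} {G1 : SimpleGraph V1} {L L' : List (V0 × V1)}
    (hsub : ∀ p ∈ L', p ∈ L) (h : PartialIso G0 G1 L) : PartialIso G0 G1 L' :=
  fun p hp q hq => h p (hsub p hp) q (hsub q hq)

lemma duplicatorWins_mono {G0 : SimpleGraph V0} {G1 : SimpleGraph V1} {m n : ℕ}
    (h : DuplicatorWins G0 G1 m) (hle : n ≤ m) : DuplicatorWins G0 G1 n := by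
  obtain ⟨D, hD⟩ := h
  exact ⟨D, fun σ => partialIso_mono (fun p hp => (efRounds_prefix D σ hle).subset hp) (hD σ)⟩

lemma wins_of_le_lEF {G0 : SimpleGraph V0} {G1 : SimpleGraph V1} {N : ℕ}
    (hN : 0 < N) (h : (N : ℕ∞) ≤ lEF G0 G1) : DuplicatorWins G0 G1 N := by
  have hex : ∃ m : ℕ, N ≤ m ∧ DuplicatorWins G0 G1 m := by
    by_contra hc
    push_neg at hc
    have hb : lEF G0 G1 ≤ ((N - 1 : ℕ) : ℕ∞) := by
      apply sSup_le
      rintro k ⟨m, hm, rfl⟩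
      have : m < N := by
        by_contra h'
        exact absurd hm (by simpa using (hc m (by omega)))
      exact_mod_cast by omega
    have := h.trans hb
    rw [Nat.cast_le] at this
    omega
  obtain ⟨m, h1, h2⟩ := hex
  exact duplicatorWins_mono h2 h1

open Classical in
/-- The partial function `V0 → V1` induced by a list of EF pairs. -/
noncomputable def pf [Nonempty V1] (P : List (V0 × V1)) : V0 → V1 := fun x =>
  if h : ∃ y, (x, y) ∈ P then h.choose else Classical.ofNonempty

lemma pf_eq [Nonempty V1] {G0 : SimpleGraph V0} {G1 : SimpleGraph V1} {P : List (V0 × V1)}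
    (hP : PartialIso G0 G1 P) {x : V0} {y : V1} (hxy : (x, y) ∈ P) : pf P x = y := by
  rw [pf, dif_pos ⟨y, hxy⟩]
  have h2 := (⟨y, hxy⟩ : ∃ y', (x, y') ∈ P).choose_spec
  exact ((hP _ h2 _ hxy).1).mp rfl

lemma pf_snd_inj {G0 : SimpleGraph V0} {G1 : SimpleGraph V1} {P : List (V0 × V1)}
    (hP : PartialIso G0 G1 P) {p q : V0 × V1} (hp : p ∈ P) (hq : q ∈ P)
    (h : p.2 = q.2) : p.1 = q.1 :=
  ((hP p hp q hq).1).mpr h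

/-- transporting Sym2 equalities through the pair list, `.2`-to-`.1` direction. -/
lemma sym2_snd_to_fst {G0 : SimpleGraph V0} {G1 : SimpleGraph V1} {P : List (V0 × V1)}
    (hP : PartialIso G0 G1 P) {p q p' q' : V0 × V1}
    (hp : p ∈ P) (hq : q ∈ P) (hp' : p' ∈ P) (hq' : q' ∈ P)
    (h : s(p.2, q.2) = s(p'.2, q'.2)) : s(p.1, q.1) = s(p'.1, q'.1) := by
  rw [Sym2.eq_iff] at h ⊢
  rcases h with ⟨h1, h2⟩ | ⟨h1, h2⟩
  · exact Or.inl ⟨pf_snd_inj hP hp hp' h1, pf_snd_inj hP hq hq' h2⟩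
  · exact Or.inr ⟨pf_snd_inj hP hp hq' h1, pf_snd_inj hP hq hp' h2⟩

lemma sym2_fst_to_snd {G0 : SimpleGraph V0} {G1 : SimpleGraph V1} {P : List (V0 × V1)}
    (hP : PartialIso G0 G1 P) {p q p' q' : V0 × V1}
    (hp : p ∈ P) (hq : q ∈ P) (hp' : p' ∈ P) (hq' : q' ∈ P)
    (h : s(p.1, q.1) = s(p'.1, q'.1)) : s(p.2, q.2) = s(p'.2, q'.2) := by
  rw [Sym2.eq_iff] at h ⊢
  rcases h with ⟨h1, h2⟩ | ⟨h1, h2⟩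
  · exact Or.inl ⟨(hP _ hp _ hp').1.mp h1, (hP _ hq _ hq').1.mp h2⟩
  · exact Or.inr ⟨(hP _ hp _ hq').1.mp h1, (hP _ hq _ hp').1.mp h2⟩


end Aux2

section Aux3
variable {V : Type*}
lemma graphOf_adj {L : List (Sym2 V)} {x y : V} :
    (graphOf L).Adj x y ↔ s(x, y) ∈ L ∧ x ≠ y := by
  simp [graphOf]

/-- The vertex support of a list of edges. -/
def suppL (L : List (Sym2 V)) : Set V := {v | ∃ e ∈ L, v ∈ e}

lemma mem_suppL_of_adj {L : List (Sym2 V)} {x y : V} (h : (graphOf L).Adj x y) :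
    x ∈ suppL L :=
  ⟨s(x, y), (graphOf_adj.mp h).1, Sym2.mem_mk_left _ _⟩

lemma mem_suppL_iff_adj {L : List (Sym2 V)} (hd : ∀ e ∈ L, ¬ e.IsDiag) {v : V} :
    v ∈ suppL L ↔ ∃ w, (graphOf L).Adj v w := by
  constructor
  · rintro ⟨e, he, hv⟩
    obtain ⟨w, rfl⟩ := Sym2.mem_iff_exists.mp hv
    refine ⟨w, graphOf_adj.mpr ⟨he, ?_⟩⟩
    intro hvw; exact hd _ he (by simp [hvw])
  · rintro ⟨w, hw⟩
    exact mem_suppL_of_adj hw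

section Transfer
variable {V0 V1 : Type*} [Fintype V0] [Fintype V1]

lemma suppL_map (g : V0 → V1) (L : List (Sym2 V0)) :
    suppL (L.map (Sym2.map g)) = g '' suppL L := by
  ext w
  constructor
  · rintro ⟨f, hf, hw⟩
    rw [List.mem_map] at hf
    obtain ⟨e, he, rfl⟩ := hf
    rw [Sym2.mem_map] at hw
    obtain ⟨v, hv, rfl⟩ := hw
    exact ⟨v, ⟨e, he, hv⟩, rfl⟩
  · rintro ⟨v, ⟨e, he, hv⟩, rfl⟩
    exact ⟨Sym2.map g e, List.mem_map.mpr ⟨e, he, rfl⟩, Sym2.mem_map.mpr ⟨v, hv, rfl⟩⟩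

lemma pull_back_mem {g : V0 → V1} {L : List (Sym2 V0)} {dom : Set V0}
    (hinj : Set.InjOn g dom) (hsupp : suppL L ⊆ dom) {x y : V0}
    (hx : x ∈ dom) (hy : y ∈ dom)
    (h : s(g x, g y) ∈ L.map (Sym2.map g)) : s(x, y) ∈ L := by
  rw [List.mem_map] at h
  obtain ⟨e, he, hmap⟩ := h
  have hu : e.out.1 ∈ suppL L := ⟨e, he, Sym2.out_fst_mem e⟩
  have hv : e.out.2 ∈ suppL L := ⟨e, he, Sym2.out_snd_mem e⟩
  have hout : s(e.out.1, e.out.2) = e := by rw [Sym2.mk]; exact e.out_eq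
  rw [← hout] at he hmap
  rw [Sym2.map_pair_eq, Sym2.eq_iff] at hmap
  rcases hmap with ⟨h1, h2⟩ | ⟨h1, h2⟩
  · rwa [hinj (hsupp hu) hx h1, hinj (hsupp hv) hy h2] at he
  · rwa [Sym2.eq_swap, hinj (hsupp hv) hx h2, hinj (hsupp hu) hy h1] at he

lemma map_not_isDiag {g : V0 → V1} {L : List (Sym2 V0)} {dom : Set V0}
    (hinj : Set.InjOn g dom) (hsupp : suppL L ⊆ dom)
    (hd : ∀ e ∈ L, ¬ e.IsDiag) : ∀ f ∈ L.map (Sym2.map g), ¬ f.IsDiag := by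
  intro f hf
  rw [List.mem_map] at hf
  obtain ⟨e, he, rfl⟩ := hf
  rw [← show s(e.out.1, e.out.2) = e from by rw [Sym2.mk]; exact e.out_eq] at he ⊢
  rw [Sym2.map_pair_eq, Sym2.mk_isDiag_iff]
  intro hgeq
  have h1 : e.out.1 ∈ dom := hsupp ⟨_, he, Sym2.mem_mk_left _ _⟩
  have h2 : e.out.2 ∈ dom := hsupp ⟨_, he, Sym2.mem_mk_right _ _⟩
  exact hd _ he (by rw [Sym2.mk_isDiag_iff]; exact hinj h1 h2 hgeq)

lemma transfer (g : V0 → V1) (R B : List (Sym2 V0))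
    (hdiag : ∀ e ∈ R ++ B, ¬ e.IsDiag)
    (hinj : Set.InjOn g (suppL (R ++ B)))
    (hiso : Nonempty (graphOf (R.map (Sym2.map g)) ≃g graphOf (B.map (Sym2.map g)))) :
    Nonempty (graphOf R ≃g graphOf B) := by
  classical
  obtain ⟨φ⟩ := hiso
  have hdR : ∀ e ∈ R, ¬ e.IsDiag := fun e he => hdiag e (List.mem_append_left _ he)
  have hdB : ∀ e ∈ B, ¬ e.IsDiag := fun e he => hdiag e (List.mem_append_right _ he)
  have hsR : suppL R ⊆ suppL (R ++ B) := fun v ⟨e, he, hv⟩ =>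
    ⟨e, List.mem_append_left _ he, hv⟩
  have hsB : suppL B ⊆ suppL (R ++ B) := fun v ⟨e, he, hv⟩ =>
    ⟨e, List.mem_append_right _ he, hv⟩
  have hdR1 := map_not_isDiag hinj hsR hdR
  have hdB1 := map_not_isDiag hinj hsB hdB
  -- φ maps supp R1 onto supp B1
  have hφ1 : ∀ v ∈ suppL (R.map (Sym2.map g)), φ v ∈ suppL (B.map (Sym2.map g)) := by
    intro v hv
    obtain ⟨w, hw⟩ := (mem_suppL_iff_adj hdR1).mp hv
    exact (mem_suppL_iff_adj hdB1).mpr ⟨φ w, φ.map_rel_iff.mpr hw⟩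
  have hφ2 : ∀ w ∈ suppL (B.map (Sym2.map g)), φ.symm w ∈ suppL (R.map (Sym2.map g)) := by
    intro w hw
    obtain ⟨u, hu⟩ := (mem_suppL_iff_adj hdB1).mp hw
    refine (mem_suppL_iff_adj hdR1).mpr ⟨φ.symm u, φ.map_rel_iff.mp ?_⟩
    simpa using hu
  have himg : φ '' suppL (R.map (Sym2.map g)) = suppL (B.map (Sym2.map g)) := by
    apply Set.eq_of_subset_of_subset
    · rintro w ⟨v, hv, rfl⟩; exact hφ1 v hv
    · intro w hw
      exact ⟨φ.symm w, hφ2 w hw, by simp⟩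
  -- cardinalities
  have hcard : (suppL R).ncard = (suppL B).ncard := by
    have e1 : (suppL (R.map (Sym2.map g))).ncard = (suppL R).ncard := by
      rw [suppL_map]; exact Set.ncard_image_of_injOn (hinj.mono hsR)
    have e2 : (suppL (B.map (Sym2.map g))).ncard = (suppL B).ncard := by
      rw [suppL_map]; exact Set.ncard_image_of_injOn (hinj.mono hsB)
    have e3 : (φ '' suppL (R.map (Sym2.map g))).ncard
        = (suppL (R.map (Sym2.map g))).ncard :=
      Set.ncard_image_of_injective _ φ.injective
    rw [← e1, ← e2, ← himg, e3]
  have hcardc : ((suppL R)ᶜ).ncard = ((suppL B)ᶜ).ncard := by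
    have h1 := Set.ncard_add_ncard_compl (suppL R)
    have h2 := Set.ncard_add_ncard_compl (suppL B)
    omega
  -- complement bijection
  have hcardc' : Fintype.card ((suppL R)ᶜ : Set V0) = Fintype.card ((suppL B)ᶜ : Set V0) := by
    rw [← Nat.card_eq_fintype_card, ← Nat.card_eq_fintype_card,
      Nat.card_coe_set_eq, Nat.card_coe_set_eq]
    exact hcardc
  let eC : ((suppL R)ᶜ : Set V0) ≃ ((suppL B)ᶜ : Set V0) := Fintype.equivOfCardEq hcardc'
  -- the map on the support
  have hchoice : ∀ x : V0, x ∈ suppL R → ∃ y, y ∈ suppL B ∧ g y = φ (g x) := by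
    intro x hx
    have hx1 : g x ∈ suppL (R.map (Sym2.map g)) := by
      rw [suppL_map]; exact ⟨x, hx, rfl⟩
    have := hφ1 _ hx1
    rw [suppL_map] at this
    obtain ⟨y, hy, hgy⟩ := this
    exact ⟨y, hy, hgy⟩
  choose bH hbH1 hbH2 using hchoice
  set ψf : V0 → V0 := fun x => if hx : x ∈ suppL R then bH x hx else (eC ⟨x, hx⟩ : V0)
    with hψf
  have hmem1 : ∀ x (hx : x ∈ suppL R), ψf x = bH x hx := fun x hx => dif_pos hx
  have hmemB : ∀ x (hx : x ∈ suppL R), ψf x ∈ suppL B := fun x hx => by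
    rw [hmem1 x hx]; exact hbH1 x hx
  have hgψ : ∀ x (hx : x ∈ suppL R), g (ψf x) = φ (g x) := fun x hx => by
    rw [hmem1 x hx]; exact hbH2 x hx
  have hmemBc : ∀ x (hx : x ∉ suppL R), ψf x ∉ suppL B := fun x hx => by
    rw [hψf]; simp only [dif_neg hx]
    exact (eC ⟨x, hx⟩).2
  have hinjψ : Function.Injective ψf := by
    intro x1 x2 heq
    by_cases h1 : x1 ∈ suppL R <;> by_cases h2 : x2 ∈ suppL R
    · have : g (ψf x1) = g (ψf x2) := by rw [heq]
      rw [hgψ x1 h1, hgψ x2 h2] at this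
      have hgg : g x1 = g x2 := φ.injective this
      exact hinj (hsR h1) (hsR h2) hgg
    · exact absurd (heq ▸ hmemB x1 h1) (hmemBc x2 h2)
    · exact absurd (heq ▸ hmemBc x1 h1) (not_not_intro (hmemB x2 h2))
    · have e1 : (eC ⟨x1, h1⟩ : V0) = (eC ⟨x2, h2⟩ : V0) := by
        rw [hψf] at heq; simpa [dif_neg h1, dif_neg h2] using heq
      have := eC.injective (Subtype.ext e1)
      exact congrArg Subtype.val this
  have hbij : Function.Bijective ψf := (Finite.injective_iff_bijective).mp hinjψ
  refine ⟨⟨Equiv.ofBijective ψf hbij, ?_⟩⟩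
  intro a b
  show (graphOf B).Adj (ψf a) (ψf b) ↔ (graphOf R).Adj a b
  constructor
  · intro h
    obtain ⟨hmem, hne⟩ := graphOf_adj.mp h
    have ha : a ∈ suppL R := by
      by_contra hc
      exact hmemBc a hc ⟨_, hmem, Sym2.mem_mk_left _ _⟩
    have hb : b ∈ suppL R := by
      by_contra hc
      exact hmemBc b hc ⟨_, hmem, Sym2.mem_mk_right _ _⟩
    have hψa : ψf a ∈ suppL B := hmemB a ha
    have hψb : ψf b ∈ suppL B := hmemB b hb
    have hmem1' : s(g (ψf a), g (ψf b)) ∈ B.map (Sym2.map g) :=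
      List.mem_map.mpr ⟨s(ψf a, ψf b), hmem, Sym2.map_pair_eq _ _ _⟩
    have hgne : g (ψf a) ≠ g (ψf b) := fun hgg =>
      hne (hinj (hsB hψa) (hsB hψb) hgg)
    have hadj1 : (graphOf (B.map (Sym2.map g))).Adj (φ (g a)) (φ (g b)) := by
      rw [← hgψ a ha, ← hgψ b hb]
      exact graphOf_adj.mpr ⟨hmem1', hgne⟩
    have hadj0 : (graphOf (R.map (Sym2.map g))).Adj (g a) (g b) := φ.map_rel_iff.mp hadj1
    obtain ⟨hm0, hne0⟩ := graphOf_adj.mp hadj0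
    refine graphOf_adj.mpr ⟨pull_back_mem hinj hsR (hsR ha) (hsR hb) hm0, ?_⟩
    exact fun hab => hne0 (by rw [hab])
  · intro h
    obtain ⟨hmem, hne⟩ := graphOf_adj.mp h
    have ha : a ∈ suppL R := ⟨_, hmem, Sym2.mem_mk_left _ _⟩
    have hb : b ∈ suppL R := ⟨_, hmem, Sym2.mem_mk_right _ _⟩
    have hgne : g a ≠ g b := fun hgg => hne (hinj (hsR ha) (hsR hb) hgg)
    have hadj0 : (graphOf (R.map (Sym2.map g))).Adj (g a) (g b) :=
      graphOf_adj.mpr ⟨List.mem_map.mpr ⟨s(a, b), hmem, Sym2.map_pair_eq _ _ _⟩, hgne⟩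
    have hadj1 : (graphOf (B.map (Sym2.map g))).Adj (φ (g a)) (φ (g b)) :=
      φ.map_rel_iff.mpr hadj0
    rw [← hgψ a ha, ← hgψ b hb] at hadj1
    obtain ⟨hm1, hne1⟩ := graphOf_adj.mp hadj1
    have hψa : ψf a ∈ suppL B := hmemB a ha
    have hψb : ψf b ∈ suppL B := hmemB b hb
    refine graphOf_adj.mpr ⟨pull_back_mem hinj hsB (hsB hψa) (hsB hψb) hm1, ?_⟩
    exact fun hab => hne1 (by rw [hab])

end Transfer

end Aux3


section Sim
variable {V0 V1 : Type*} [Fintype V0] [Fintype V1] [Nonempty V0] [Nonempty V1]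
  {G0 : SimpleGraph V0} {G1 : SimpleGraph V1}

/-- The joint state of the simulated plays. -/
structure SimSt (V0 V1 : Type*) where
  P : List (V0 × V1)
  A0 : List (Sym2 V0)
  B0 : List (Sym2 V0)
  A1 : List (Sym2 V1)
  B1 : List (Sym2 V1)

def initSt : SimSt V0 V1 := ⟨[], [], [], [], []⟩

noncomputable def stepA (D : DStrategy V0 V1) (P : List (V0 × V1)) (a0 : Sym2 V0) :
    List (V0 × V1) × Sym2 V1 :=
  let p := D.resp P (Sum.inl a0.out.1)
  let q := D.resp (P ++ [p]) (Sum.inl a0.out.2)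
  (P ++ [p, q], s(p.2, q.2))

noncomputable def stepB (D : DStrategy V0 V1) (P : List (V0 × V1)) (b1 : Sym2 V1) :
    List (V0 × V1) × Sym2 V0 :=
  let p := D.resp P (Sum.inr b1.out.1)
  let q := D.resp (P ++ [p]) (Sum.inr b1.out.2)
  (P ++ [p, q], s(p.1, q.1))

noncomputable def stepRound (D : DStrategy V0 V1) (S2 : BStrategy G1) (s : SimSt V0 V1)
    (a0 : Sym2 V0) : SimSt V0 V1 :=
  let PA := stepA D s.P a0
  let b1 := S2.move (s.A1 ++ [PA.2])
  let PB := stepB D PA.1 b1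
  ⟨PB.1, s.A0 ++ [a0], s.B0 ++ [PB.2], s.A1 ++ [PA.2], s.B1 ++ [b1]⟩

noncomputable def stepRoundA (D : DStrategy V0 V1) (S1₀ : AStrategy G0) (s : SimSt V0 V1)
    (b1 : Sym2 V1) : SimSt V0 V1 :=
  let a0 := S1₀.move s.B0
  let PA := stepA D s.P a0
  let PB := stepB D PA.1 b1
  ⟨PB.1, s.A0 ++ [a0], s.B0 ++ [PB.2], s.A1 ++ [PA.2], s.B1 ++ [b1]⟩

variable (D : DStrategy V0 V1) (S2 : BStrategy G1) (S1₀ : AStrategy G0)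

noncomputable def trB (L : List (Sym2 V0)) : SimSt V0 V1 := L.foldl (stepRound D S2) initSt

noncomputable def candB (L : List (Sym2 V0)) : Sym2 V0 :=
  (trB D S2 L).B0.getLastD Classical.ofNonempty

noncomputable def S2z (G0' : SimpleGraph V0) : BStrategy G0' := mkB G0' (candB D S2)

noncomputable def trA (L : List (Sym2 V1)) : SimSt V0 V1 :=
  L.foldl (stepRoundA D S1₀) initSt

noncomputable def candA (L : List (Sym2 V1)) : Sym2 V1 :=
  (stepA D (trA D S1₀ L).P (S1₀.move (trA D S1₀ L).B0)).2

noncomputable def S1f (G1' : SimpleGraph V1) : AStrategy G1' := mkA G1' (candA D S1₀)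

lemma S2z_move (G0' : SimpleGraph V0) : (S2z D S2 G0').move = patched G0' 1 (candB D S2) :=
  rfl

lemma S1f_move : (S1f D S1₀ G1).move = patched G1 0 (candA D S1₀) := rfl

noncomputable def joint : ℕ → SimSt V0 V1
  | 0 => initSt
  | i + 1 => stepRound D S2 (joint i) (S1₀.move (joint i).B0)

/-- the moves of round `i+1` (0-indexed by `i`) -/
noncomputable def pa0 (i : ℕ) : Sym2 V0 := S1₀.move (joint D S2 S1₀ i).B0
noncomputable def pA (i : ℕ) : V0 × V1 :=
  D.resp (joint D S2 S1₀ i).P (Sum.inl (pa0 D S2 S1₀ i).out.1)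
noncomputable def qA (i : ℕ) : V0 × V1 :=
  D.resp ((joint D S2 S1₀ i).P ++ [pA D S2 S1₀ i]) (Sum.inl (pa0 D S2 S1₀ i).out.2)
noncomputable def pa1 (i : ℕ) : Sym2 V1 := s((pA D S2 S1₀ i).2, (qA D S2 S1₀ i).2)
noncomputable def pb1 (i : ℕ) : Sym2 V1 :=
  S2.move ((joint D S2 S1₀ i).A1 ++ [pa1 D S2 S1₀ i])
noncomputable def pB (i : ℕ) : V0 × V1 :=
  D.resp ((joint D S2 S1₀ i).P ++ [pA D S2 S1₀ i, qA D S2 S1₀ i])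
    (Sum.inr (pb1 D S2 S1₀ i).out.1)
noncomputable def qB (i : ℕ) : V0 × V1 :=
  D.resp ((joint D S2 S1₀ i).P ++ [pA D S2 S1₀ i, qA D S2 S1₀ i, pB D S2 S1₀ i])
    (Sum.inr (pb1 D S2 S1₀ i).out.2)
noncomputable def pb0 (i : ℕ) : Sym2 V0 := s((pB D S2 S1₀ i).1, (qB D S2 S1₀ i).1)

lemma pa0_def (i : ℕ) : pa0 D S2 S1₀ i = S1₀.move (joint D S2 S1₀ i).B0 := rfl
lemma pA_def (i : ℕ) : pA D S2 S1₀ i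
    = D.resp (joint D S2 S1₀ i).P (Sum.inl (pa0 D S2 S1₀ i).out.1) := rfl
lemma qA_def (i : ℕ) : qA D S2 S1₀ i
    = D.resp ((joint D S2 S1₀ i).P ++ [pA D S2 S1₀ i]) (Sum.inl (pa0 D S2 S1₀ i).out.2) := rfl
lemma pa1_def (i : ℕ) : pa1 D S2 S1₀ i = s((pA D S2 S1₀ i).2, (qA D S2 S1₀ i).2) := rfl
lemma pb1_def (i : ℕ) :
    pb1 D S2 S1₀ i = S2.move ((joint D S2 S1₀ i).A1 ++ [pa1 D S2 S1₀ i]) := rfl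
lemma pB_def (i : ℕ) : pB D S2 S1₀ i = D.resp ((joint D S2 S1₀ i).P
    ++ [pA D S2 S1₀ i, qA D S2 S1₀ i]) (Sum.inr (pb1 D S2 S1₀ i).out.1) := rfl
lemma qB_def (i : ℕ) : qB D S2 S1₀ i = D.resp ((joint D S2 S1₀ i).P
    ++ [pA D S2 S1₀ i, qA D S2 S1₀ i, pB D S2 S1₀ i]) (Sum.inr (pb1 D S2 S1₀ i).out.2) := rfl
lemma pb0_def (i : ℕ) : pb0 D S2 S1₀ i = s((pB D S2 S1₀ i).1, (qB D S2 S1₀ i).1) := rfl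

lemma joint_succ (i : ℕ) :
    joint D S2 S1₀ (i + 1) =
      ⟨(joint D S2 S1₀ i).P ++
          [pA D S2 S1₀ i, qA D S2 S1₀ i, pB D S2 S1₀ i, qB D S2 S1₀ i],
        (joint D S2 S1₀ i).A0 ++ [pa0 D S2 S1₀ i],
        (joint D S2 S1₀ i).B0 ++ [pb0 D S2 S1₀ i],
        (joint D S2 S1₀ i).A1 ++ [pa1 D S2 S1₀ i],
        (joint D S2 S1₀ i).B1 ++ [pb1 D S2 S1₀ i]⟩ := by
  show stepRound D S2 (joint D S2 S1₀ i) (S1₀.move (joint D S2 S1₀ i).B0) = _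
  rw [stepRound, stepA, stepB]
  simp only [List.append_assoc, List.cons_append, List.nil_append, List.singleton_append]
  rw [← pa0_def D S2 S1₀ i, ← pA_def D S2 S1₀ i, ← qA_def D S2 S1₀ i, ← pa1_def D S2 S1₀ i,
    ← pb1_def D S2 S1₀ i, ← pB_def D S2 S1₀ i, ← qB_def D S2 S1₀ i, ← pb0_def D S2 S1₀ i]

lemma joint_succ_A0 (i : ℕ) : (joint D S2 S1₀ (i + 1)).A0
    = (joint D S2 S1₀ i).A0 ++ [pa0 D S2 S1₀ i] := by rw [joint_succ]
lemma joint_succ_B0 (i : ℕ) : (joint D S2 S1₀ (i + 1)).B0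
    = (joint D S2 S1₀ i).B0 ++ [pb0 D S2 S1₀ i] := by rw [joint_succ]
lemma joint_succ_A1 (i : ℕ) : (joint D S2 S1₀ (i + 1)).A1
    = (joint D S2 S1₀ i).A1 ++ [pa1 D S2 S1₀ i] := by rw [joint_succ]
lemma joint_succ_B1 (i : ℕ) : (joint D S2 S1₀ (i + 1)).B1
    = (joint D S2 S1₀ i).B1 ++ [pb1 D S2 S1₀ i] := by rw [joint_succ]

lemma joint_A0 (n : ℕ) : (joint D S2 S1₀ n).A0 = (List.range n).map (pa0 D S2 S1₀) := by
  induction n with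
  | zero => rfl
  | succ n ih => rw [joint_succ_A0, List.range_succ, List.map_append, ← ih]; rfl

lemma joint_B0 (n : ℕ) : (joint D S2 S1₀ n).B0 = (List.range n).map (pb0 D S2 S1₀) := by
  induction n with
  | zero => rfl
  | succ n ih => rw [joint_succ_B0, List.range_succ, List.map_append, ← ih]; rfl

lemma joint_A1 (n : ℕ) : (joint D S2 S1₀ n).A1 = (List.range n).map (pa1 D S2 S1₀) := by
  induction n with
  | zero => rfl
  | succ n ih => rw [joint_succ_A1, List.range_succ, List.map_append, ← ih]; rfl

lemma joint_B1 (n : ℕ) : (joint D S2 S1₀ n).B1 = (List.range n).map (pb1 D S2 S1₀) := by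
  induction n with
  | zero => rfl
  | succ n ih => rw [joint_succ_B1, List.range_succ, List.map_append, ← ih]; rfl

lemma mem_A0 {e : Sym2 V0} {n : ℕ} :
    e ∈ (joint D S2 S1₀ n).A0 ↔ ∃ j, j < n ∧ pa0 D S2 S1₀ j = e := by
  rw [joint_A0]; simp
lemma mem_B0 {e : Sym2 V0} {n : ℕ} :
    e ∈ (joint D S2 S1₀ n).B0 ↔ ∃ j, j < n ∧ pb0 D S2 S1₀ j = e := by
  rw [joint_B0]; simp
lemma mem_A1 {e : Sym2 V1} {n : ℕ} :
    e ∈ (joint D S2 S1₀ n).A1 ↔ ∃ j, j < n ∧ pa1 D S2 S1₀ j = e := by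
  rw [joint_A1]; simp
lemma mem_B1 {e : Sym2 V1} {n : ℕ} :
    e ∈ (joint D S2 S1₀ n).B1 ↔ ∃ j, j < n ∧ pb1 D S2 S1₀ j = e := by
  rw [joint_B1]; simp

lemma joint_P_prefix {m n : ℕ} (h : m ≤ n) :
    (joint D S2 S1₀ m).P <+: (joint D S2 S1₀ n).P := by
  induction n with
  | zero => simp only [Nat.le_zero] at h; subst h; exact List.prefix_refl _
  | succ n ih =>
    rcases Nat.lt_or_ge m (n + 1) with h' | h'
    · exact (ih (by omega)).trans (by rw [joint_succ]; exact ⟨_, rfl⟩)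
    · have : m = n + 1 := by omega
      subst this; exact List.prefix_refl _

lemma joint_lengths (n : ℕ) :
    (joint D S2 S1₀ n).A0.length = n ∧ (joint D S2 S1₀ n).B0.length = n ∧
    (joint D S2 S1₀ n).A1.length = n ∧ (joint D S2 S1₀ n).B1.length = n := by
  rw [joint_A0, joint_B0, joint_A1, joint_B1]; simp

lemma joint_take {m n : ℕ} (h : m ≤ n) :
    (joint D S2 S1₀ n).A0.take m = (joint D S2 S1₀ m).A0 ∧
    (joint D S2 S1₀ n).B0.take m = (joint D S2 S1₀ m).B0 ∧
    (joint D S2 S1₀ n).A1.take m = (joint D S2 S1₀ m).A1 ∧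
    (joint D S2 S1₀ n).B1.take m = (joint D S2 S1₀ m).B1 := by
  rw [joint_A0 D S2 S1₀ n, joint_B0 D S2 S1₀ n, joint_A1 D S2 S1₀ n, joint_B1 D S2 S1₀ n,
    joint_A0 D S2 S1₀ m, joint_B0 D S2 S1₀ m, joint_A1 D S2 S1₀ m, joint_B1 D S2 S1₀ m]
  rw [← List.map_take, ← List.map_take, ← List.map_take, ← List.map_take,
    List.take_range, Nat.min_eq_left h]
  exact ⟨rfl, rfl, rfl, rfl⟩

lemma pa0_eq_pair (i : ℕ) :
    pa0 D S2 S1₀ i = s((pA D S2 S1₀ i).1, (qA D S2 S1₀ i).1) := by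
  rw [pA_def, qA_def, D.resp_left, D.resp_left, mk_out]

lemma pb1_eq_pair (i : ℕ) :
    pb1 D S2 S1₀ i = s((pB D S2 S1₀ i).2, (qB D S2 S1₀ i).2) := by
  conv_lhs => rw [← mk_out (pb1 D S2 S1₀ i)]
  rw [pB_def, qB_def, D.resp_right, D.resp_right]

lemma pairs_mem_succ (i : ℕ) :
    pA D S2 S1₀ i ∈ (joint D S2 S1₀ (i + 1)).P ∧
    qA D S2 S1₀ i ∈ (joint D S2 S1₀ (i + 1)).P ∧
    pB D S2 S1₀ i ∈ (joint D S2 S1₀ (i + 1)).P ∧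
    qB D S2 S1₀ i ∈ (joint D S2 S1₀ (i + 1)).P := by
  rw [joint_succ]; refine ⟨?_, ?_, ?_, ?_⟩ <;> simp

lemma trB_joint (n : ℕ) : trB D S2 ((joint D S2 S1₀ n).A0) = joint D S2 S1₀ n := by
  induction n with
  | zero => rfl
  | succ n ih =>
    rw [joint_succ_A0, trB, List.foldl_concat, ← trB, ih]
    rfl

lemma trA_joint (n : ℕ) : trA D S1₀ ((joint D S2 S1₀ n).B1) = joint D S2 S1₀ n := by
  induction n with
  | zero => rfl
  | succ n ih =>
    rw [joint_succ_B1, trA, List.foldl_concat, ← trA, ih]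
    show stepRoundA D S1₀ (joint D S2 S1₀ n) (pb1 D S2 S1₀ n)
      = stepRound D S2 (joint D S2 S1₀ n) (S1₀.move (joint D S2 S1₀ n).B0)
    simp only [stepRoundA, stepRound, stepA, stepB, pb1_def, pa1_def, pA_def, qA_def, pa0_def]

lemma getLastD_concat' {α : Type*} (l : List α) (a d : α) : (l ++ [a]).getLastD d = a := by
  induction l with
  | nil => rfl
  | cons x l ih =>
    cases l with
    | nil => rfl
    | cons y l => simpa using ih

lemma candB_joint (n : ℕ) :
    candB D S2 ((joint D S2 S1₀ (n + 1)).A0) = pb0 D S2 S1₀ n := by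
  rw [candB, trB_joint, joint_succ_B0, getLastD_concat']

lemma candA_joint (n : ℕ) :
    candA D S1₀ ((joint D S2 S1₀ n).B1) = pa1 D S2 S1₀ n := by
  rw [candA, trA_joint, stepA]
  rw [← pa0_def D S2 S1₀ n, ← pA_def D S2 S1₀ n, ← qA_def D S2 S1₀ n, ← pa1_def D S2 S1₀ n]

/-- the canonical spoiler strategy -/
noncomputable def picks (k : ℕ) : V0 ⊕ V1 :=
  if k % 4 = 0 then Sum.inl (pa0 D S2 S1₀ (k / 4)).out.1
  else if k % 4 = 1 then Sum.inl (pa0 D S2 S1₀ (k / 4)).out.2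
  else if k % 4 = 2 then Sum.inr (pb1 D S2 S1₀ (k / 4)).out.1
  else Sum.inr (pb1 D S2 S1₀ (k / 4)).out.2

noncomputable def sigmaC : List (V0 × V1) → V0 ⊕ V1 := fun L => picks D S2 S1₀ L.length

lemma ef_match (n : ℕ) :
    efRounds D (sigmaC D S2 S1₀) (4 * n) = (joint D S2 S1₀ n).P := by
  have e1 : ∀ k, efRounds D (sigmaC D S2 S1₀) (k + 1) =
      efRounds D (sigmaC D S2 S1₀) k ++
        [D.resp (efRounds D (sigmaC D S2 S1₀) k) (picks D S2 S1₀ k)] := by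
    intro k
    show efRounds D (sigmaC D S2 S1₀) k ++ [_] = _
    rw [sigmaC, efRounds_length]
  induction n with
  | zero => rfl
  | succ n ih =>
    have p0 : picks D S2 S1₀ (4 * n) = Sum.inl (pa0 D S2 S1₀ n).out.1 := by
      rw [picks, if_pos (show 4 * n % 4 = 0 by omega), show 4 * n / 4 = n by omega]
    have p1 : picks D S2 S1₀ (4 * n + 1) = Sum.inl (pa0 D S2 S1₀ n).out.2 := by
      rw [picks, if_neg (show ¬(4 * n + 1) % 4 = 0 by omega),
        if_pos (show (4 * n + 1) % 4 = 1 by omega), show (4 * n + 1) / 4 = n by omega]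
    have p2 : picks D S2 S1₀ (4 * n + 2) = Sum.inr (pb1 D S2 S1₀ n).out.1 := by
      rw [picks, if_neg (show ¬(4 * n + 2) % 4 = 0 by omega),
        if_neg (show ¬(4 * n + 2) % 4 = 1 by omega),
        if_pos (show (4 * n + 2) % 4 = 2 by omega), show (4 * n + 2) / 4 = n by omega]
    have p3 : picks D S2 S1₀ (4 * n + 3) = Sum.inr (pb1 D S2 S1₀ n).out.2 := by
      rw [picks, if_neg (show ¬(4 * n + 3) % 4 = 0 by omega),
        if_neg (show ¬(4 * n + 3) % 4 = 1 by omega),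
        if_neg (show ¬(4 * n + 3) % 4 = 2 by omega), show (4 * n + 3) / 4 = n by omega]
    have E1 : efRounds D (sigmaC D S2 S1₀) (4 * n + 1)
        = (joint D S2 S1₀ n).P ++ [pA D S2 S1₀ n] := by
      rw [e1, ih, p0, ← pA_def D S2 S1₀ n]
    have E2 : efRounds D (sigmaC D S2 S1₀) (4 * n + 2)
        = (joint D S2 S1₀ n).P ++ [pA D S2 S1₀ n, qA D S2 S1₀ n] := by
      rw [show 4 * n + 2 = (4 * n + 1) + 1 by omega, e1, E1, p1, ← qA_def D S2 S1₀ n]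
      simp
    have E3 : efRounds D (sigmaC D S2 S1₀) (4 * n + 3)
        = (joint D S2 S1₀ n).P ++ [pA D S2 S1₀ n, qA D S2 S1₀ n, pB D S2 S1₀ n] := by
      rw [show 4 * n + 3 = (4 * n + 2) + 1 by omega, e1, E2, p2, ← pB_def D S2 S1₀ n]
      simp
    rw [show 4 * (n + 1) = (4 * n + 3) + 1 by omega, e1, E3, p3, ← qB_def D S2 S1₀ n,
      joint_succ]
    simp

/-- The main invariant of the simulated play. -/
lemma sim_main (lam : ℕ) (hE0 : 2 * lam + 2 ≤ G0.edgeSet.ncard)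
    (hE1 : 2 * lam + 2 ≤ G1.edgeSet.ncard)
    (hPIso : PartialIso G0 G1 (joint D S2 S1₀ (lam + 1)).P) :
    ∀ i, i ≤ lam + 1 →
      (∀ e ∈ (joint D S2 S1₀ i).A0 ++ (joint D S2 S1₀ i).B0, e ∈ G0.edgeSet) ∧
      (∀ e ∈ (joint D S2 S1₀ i).A1 ++ (joint D S2 S1₀ i).B1, e ∈ G1.edgeSet) ∧
      ((joint D S2 S1₀ i).A0 ++ (joint D S2 S1₀ i).B0).Nodup ∧
      ((joint D S2 S1₀ i).A1 ++ (joint D S2 S1₀ i).B1).Nodup ∧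
      (∀ j, j < i → (S2z D S2 G0).move ((joint D S2 S1₀ (j + 1)).A0) = pb0 D S2 S1₀ j) ∧
      (∀ j, j < i → (S1f D S1₀ G1).move ((joint D S2 S1₀ j).B1) = pa1 D S2 S1₀ j) := by
  intro i
  induction i with
  | zero =>
    intro _
    refine ⟨by simp [joint, initSt], by simp [joint, initSt], by simp [joint, initSt],
      by simp [joint, initSt], fun j hj => absurd hj (by omega), fun j hj => absurd hj (by omega)⟩
  | succ i ihi =>
    intro hi1
    obtain ⟨M0, M1, N0, N1, C2, C1⟩ := ihi (by omega)
    have hi : i ≤ lam := by omega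
    have hlen := joint_lengths D S2 S1₀ i
    have hliftP : ∀ m, m ≤ lam + 1 → ∀ x ∈ (joint D S2 S1₀ m).P,
        x ∈ (joint D S2 S1₀ (lam + 1)).P :=
      fun m hm x hx => (joint_P_prefix D S2 S1₀ hm).subset hx
    -- pairs of earlier rounds, seen in the final position
    have hpairs : ∀ j, j < lam + 1 →
        pA D S2 S1₀ j ∈ (joint D S2 S1₀ (lam + 1)).P ∧
        qA D S2 S1₀ j ∈ (joint D S2 S1₀ (lam + 1)).P ∧
        pB D S2 S1₀ j ∈ (joint D S2 S1₀ (lam + 1)).P ∧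
        qB D S2 S1₀ j ∈ (joint D S2 S1₀ (lam + 1)).P := by
      intro j hj
      obtain ⟨w1, w2, w3, w4⟩ := pairs_mem_succ D S2 S1₀ j
      exact ⟨hliftP (j+1) (by omega) _ w1, hliftP (j+1) (by omega) _ w2,
        hliftP (j+1) (by omega) _ w3, hliftP (j+1) (by omega) _ w4⟩
    have hNB0 : (joint D S2 S1₀ i).B0.Nodup := (List.nodup_append.mp N0).2.1
    have hNA1 : (joint D S2 S1₀ i).A1.Nodup := (List.nodup_append.mp N1).1
    -- A's move in G0
    obtain ⟨ha0E, ha0B0, ha0pre⟩ := S1₀.valid (joint D S2 S1₀ i).B0 hNB0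
      (fun e he => M0 e (List.mem_append_right _ he))
      (by rw [hlen.2.1]; omega)
    rw [← pa0_def D S2 S1₀ i] at ha0E ha0B0
    have ha0A0 : pa0 D S2 S1₀ i ∉ (joint D S2 S1₀ i).A0 := by
      rw [mem_A0]
      rintro ⟨j, hj, hje⟩
      refine ha0pre (joint D S2 S1₀ j).B0 ?_ ?_ hje
      · rw [← (joint_take D S2 S1₀ (le_of_lt hj)).2.1]
        exact List.take_prefix _ _
      · intro hEq
        have := (joint_lengths D S2 S1₀ j).2.1
        rw [hEq, hlen.2.1] at this
        omega
    -- the move a1 in G1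
    have hadjA : G0.Adj (pA D S2 S1₀ i).1 (qA D S2 S1₀ i).1 := by
      rw [pA_def, qA_def, D.resp_left, D.resp_left]
      exact adj_out ha0E
    have ha1E : pa1 D S2 S1₀ i ∈ G1.edgeSet := by
      rw [pa1_def, SimpleGraph.mem_edgeSet]
      exact ((hPIso _ (hpairs i (by omega)).1 _ (hpairs i (by omega)).2.1).2).mp hadjA
    have ha1A1B1 : pa1 D S2 S1₀ i ∉ (joint D S2 S1₀ i).A1 ++ (joint D S2 S1₀ i).B1 := by
      rw [List.mem_append, mem_A1, mem_B1]
      rintro (⟨j, hj, hje⟩ | ⟨j, hj, hje⟩)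
      · have heq : s((pA D S2 S1₀ j).2, (qA D S2 S1₀ j).2)
            = s((pA D S2 S1₀ i).2, (qA D S2 S1₀ i).2) := by
          rw [← pa1_def, ← pa1_def]; exact hje
        have := sym2_snd_to_fst hPIso (hpairs j (by omega)).1 (hpairs j (by omega)).2.1
          (hpairs i (by omega)).1 (hpairs i (by omega)).2.1 heq
        rw [← pa0_eq_pair, ← pa0_eq_pair] at this
        exact ha0A0 (mem_A0 D S2 S1₀ |>.mpr ⟨j, hj, this⟩)
      · have heq : s((pB D S2 S1₀ j).2, (qB D S2 S1₀ j).2)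
            = s((pA D S2 S1₀ i).2, (qA D S2 S1₀ i).2) := by
          rw [← pb1_eq_pair, ← pa1_def]; exact hje
        have := sym2_snd_to_fst hPIso (hpairs j (by omega)).2.2.1 (hpairs j (by omega)).2.2.2
          (hpairs i (by omega)).1 (hpairs i (by omega)).2.1 heq
        rw [← pb0_def, ← pa0_eq_pair] at this
        exact ha0B0 (mem_B0 D S2 S1₀ |>.mpr ⟨j, hj, this⟩)
    have ha1A1 : pa1 D S2 S1₀ i ∉ (joint D S2 S1₀ i).A1 :=
      fun h => ha1A1B1 (List.mem_append_left _ h)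
    have ha1B1 : pa1 D S2 S1₀ i ∉ (joint D S2 S1₀ i).B1 :=
      fun h => ha1A1B1 (List.mem_append_right _ h)
    -- B's move in G1
    obtain ⟨hb1E, hb1L, hb1pre⟩ := S2.valid ((joint D S2 S1₀ i).A1 ++ [pa1 D S2 S1₀ i])
      (by simp) (by
        rw [List.nodup_append']
        exact ⟨hNA1, List.nodup_singleton _, by simpa using ha1A1⟩)
      (by
        intro e he
        rcases List.mem_append.mp he with h | h
        · exact M1 e (List.mem_append_left _ h)
        · rw [List.mem_singleton.mp h]; exact ha1E)
      (by rw [List.length_append, hlen.2.2.1]; simp; omega)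
    rw [← pb1_def D S2 S1₀ i] at hb1E hb1L hb1pre
    have hb1B1 : pb1 D S2 S1₀ i ∉ (joint D S2 S1₀ i).B1 := by
      rw [mem_B1]
      rintro ⟨j, hj, hje⟩
      refine hb1pre ((joint D S2 S1₀ (j + 1)).A1) ?_ ?_ ?_ (by rw [← hje, pb1_def, joint_succ_A1])
      · have := (joint_lengths D S2 S1₀ (j + 1)).2.2.1
        intro hnil; rw [hnil] at this; simp at this
      · rw [← (joint_take D S2 S1₀ (show j + 1 ≤ i by omega)).2.2.1]
        exact (List.take_prefix _ _).trans ⟨[pa1 D S2 S1₀ i], rfl⟩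
      · intro hEq
        have h1 := (joint_lengths D S2 S1₀ (j + 1)).2.2.1
        rw [hEq, List.length_append, hlen.2.2.1] at h1
        simp at h1; omega
    have hb1A1 : pb1 D S2 S1₀ i ∉ (joint D S2 S1₀ i).A1 :=
      fun h => hb1L (List.mem_append_left _ h)
    have hb1a1 : pb1 D S2 S1₀ i ≠ pa1 D S2 S1₀ i :=
      fun h => hb1L (List.mem_append_right _ (by simp [h]))
    -- the move b0 in G0
    have hadjB : G1.Adj (pB D S2 S1₀ i).2 (qB D S2 S1₀ i).2 := by
      rw [pB_def, qB_def, D.resp_right, D.resp_right]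
      exact adj_out hb1E
    have hb0E : pb0 D S2 S1₀ i ∈ G0.edgeSet := by
      rw [pb0_def, SimpleGraph.mem_edgeSet]
      exact ((hPIso _ (hpairs i (by omega)).2.2.1 _ (hpairs i (by omega)).2.2.2).2).mpr hadjB
    have hb0A0 : pb0 D S2 S1₀ i ∉ (joint D S2 S1₀ i).A0 := by
      rw [mem_A0]
      rintro ⟨j, hj, hje⟩
      have heq : s((pA D S2 S1₀ j).1, (qA D S2 S1₀ j).1)
          = s((pB D S2 S1₀ i).1, (qB D S2 S1₀ i).1) := by
        rw [← pa0_eq_pair, ← pb0_def]; exact hje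
      have := sym2_fst_to_snd hPIso (hpairs j (by omega)).1 (hpairs j (by omega)).2.1
        (hpairs i (by omega)).2.2.1 (hpairs i (by omega)).2.2.2 heq
      rw [← pa1_def, ← pb1_eq_pair] at this
      exact hb1A1 (this ▸ (mem_A1 D S2 S1₀ |>.mpr ⟨j, hj, rfl⟩))
    have hb0B0 : pb0 D S2 S1₀ i ∉ (joint D S2 S1₀ i).B0 := by
      rw [mem_B0]
      rintro ⟨j, hj, hje⟩
      have heq : s((pB D S2 S1₀ j).1, (qB D S2 S1₀ j).1)
          = s((pB D S2 S1₀ i).1, (qB D S2 S1₀ i).1) := by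
        rw [← pb0_def, ← pb0_def]; exact hje
      have := sym2_fst_to_snd hPIso (hpairs j (by omega)).2.2.1 (hpairs j (by omega)).2.2.2
        (hpairs i (by omega)).2.2.1 (hpairs i (by omega)).2.2.2 heq
      rw [← pb1_eq_pair, ← pb1_eq_pair] at this
      exact hb1B1 (this ▸ (mem_B1 D S2 S1₀ |>.mpr ⟨j, hj, rfl⟩))
    have hb0a0 : pb0 D S2 S1₀ i ≠ pa0 D S2 S1₀ i := by
      intro hje
      have heq : s((pB D S2 S1₀ i).1, (qB D S2 S1₀ i).1)
          = s((pA D S2 S1₀ i).1, (qA D S2 S1₀ i).1) := by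
        rw [← pb0_def, ← pa0_eq_pair]; exact hje
      have := sym2_fst_to_snd hPIso (hpairs i (by omega)).2.2.1 (hpairs i (by omega)).2.2.2
        (hpairs i (by omega)).1 (hpairs i (by omega)).2.1 heq
      rw [← pb1_eq_pair, ← pa1_def] at this
      exact hb1a1 this
    -- assemble
    have hDisj0 : (joint D S2 S1₀ i).A0.Disjoint (joint D S2 S1₀ i).B0 :=
      (List.nodup_append'.mp N0).2.2
    have hDisj1 : (joint D S2 S1₀ i).A1.Disjoint (joint D S2 S1₀ i).B1 :=
      (List.nodup_append'.mp N1).2.2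
    have hNA0 : (joint D S2 S1₀ i).A0.Nodup := (List.nodup_append.mp N0).1
    have hNB1 : (joint D S2 S1₀ i).B1.Nodup := (List.nodup_append.mp N1).2.1
    refine ⟨?_, ?_, ?_, ?_, ?_, ?_⟩
    · rw [joint_succ_A0, joint_succ_B0]
      intro e he
      rcases List.mem_append.mp he with h | h
      · rcases List.mem_append.mp h with h' | h'
        · exact M0 e (List.mem_append_left _ h')
        · rw [List.mem_singleton.mp h']; exact ha0E
      · rcases List.mem_append.mp h with h' | h'
        · exact M0 e (List.mem_append_right _ h')
        · rw [List.mem_singleton.mp h']; exact hb0E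
    · rw [joint_succ_A1, joint_succ_B1]
      intro e he
      rcases List.mem_append.mp he with h | h
      · rcases List.mem_append.mp h with h' | h'
        · exact M1 e (List.mem_append_left _ h')
        · rw [List.mem_singleton.mp h']; exact ha1E
      · rcases List.mem_append.mp h with h' | h'
        · exact M1 e (List.mem_append_right _ h')
        · rw [List.mem_singleton.mp h']; exact hb1E
    · rw [joint_succ_A0, joint_succ_B0, List.nodup_append', List.nodup_append',
        List.nodup_append']
      refine ⟨⟨hNA0, List.nodup_singleton _, by simpa using ha0A0⟩,
        ⟨(List.nodup_append.mp N0).2.1, List.nodup_singleton _, by simpa using hb0B0⟩, ?_⟩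
      intro x hx hx'
      rcases List.mem_append.mp hx with h | h <;>
        rcases List.mem_append.mp hx' with h' | h'
      · exact hDisj0 h h'
      · rw [List.mem_singleton.mp h'] at h; exact hb0A0 h
      · rw [List.mem_singleton.mp h] at h'; exact ha0B0 h'
      · rw [List.mem_singleton.mp h] at h'
        exact hb0a0 ((List.mem_singleton.mp h').symm ▸ rfl)
    · rw [joint_succ_A1, joint_succ_B1, List.nodup_append', List.nodup_append',
        List.nodup_append']
      refine ⟨⟨hNA1, List.nodup_singleton _, by simpa using ha1A1⟩,
        ⟨hNB1, List.nodup_singleton _, by simpa using hb1B1⟩, ?_⟩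
      intro x hx hx'
      rcases List.mem_append.mp hx with h | h <;>
        rcases List.mem_append.mp hx' with h' | h'
      · exact hDisj1 h h'
      · rw [List.mem_singleton.mp h'] at h; exact hb1A1 h
      · rw [List.mem_singleton.mp h] at h'; exact ha1B1 h'
      · rw [List.mem_singleton.mp h] at h'
        exact hb1a1 ((List.mem_singleton.mp h').symm ▸ rfl)
    · -- consistency of B's translated strategy
      intro j hj
      rcases Nat.lt_or_ge j i with hj' | hj'
      · exact C2 j hj'
      · have hji : j = i := by omega
        subst hji
        rw [S2z_move]
        have hcand := candB_joint D S2 S1₀ j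
        rw [← hcand]
        apply patched_eq_cand
        · rw [hcand]; exact hb0E
        · rw [hcand, joint_succ_A0]
          intro hmem
          rcases List.mem_append.mp hmem with h | h
          · exact hb0A0 h
          · exact hb0a0 (List.mem_singleton.mp h)
        · intro k hk1 hk2 hkeq
          rw [hcand] at hkeq
          rw [(joint_lengths D S2 S1₀ (j + 1)).1] at hk2
          obtain ⟨k', rfl⟩ : ∃ k', k = k' + 1 := ⟨k - 1, by omega⟩
          rw [(joint_take D S2 S1₀ (show k' + 1 ≤ j + 1 by omega)).1] at hkeq
          have := C2 k' (by omega)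
          rw [S2z_move] at this
          rw [this] at hkeq
          exact hb0B0 (hkeq ▸ (mem_B0 D S2 S1₀ |>.mpr ⟨k', by omega, rfl⟩))
    · -- consistency of A's translated strategy
      intro j hj
      rcases Nat.lt_or_ge j i with hj' | hj'
      · exact C1 j hj'
      · have hji : j = i := by omega
        subst hji
        rw [S1f_move]
        have hcand := candA_joint D S2 S1₀ j
        rw [← hcand]
        apply patched_eq_cand
        · rw [hcand]; exact ha1E
        · rw [hcand]; exact ha1B1
        · intro k _ hk2 hkeq
          rw [hcand] at hkeq
          rw [(joint_lengths D S2 S1₀ j).2.2.2] at hk2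
          rw [(joint_take D S2 S1₀ (show k ≤ j by omega)).2.2.2] at hkeq
          have := C1 k (by omega)
          rw [S1f_move] at this
          rw [this] at hkeq
          exact ha1A1 (hkeq ▸ (mem_A1 D S2 S1₀ |>.mpr ⟨k, by omega, rfl⟩))

/-- The played rounds in `G1` match the simulation. -/
lemma rounds1_eq (lam : ℕ) (hE0 : 2 * lam + 2 ≤ G0.edgeSet.ncard)
    (hE1 : 2 * lam + 2 ≤ G1.edgeSet.ncard)
    (hPIso : PartialIso G0 G1 (joint D S2 S1₀ (lam + 1)).P) :
    ∀ i, i ≤ lam + 1 →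
      (rounds (S1f D S1₀ G1).move S2.move i).map Prod.fst = (joint D S2 S1₀ i).A1 ∧
      (rounds (S1f D S1₀ G1).move S2.move i).map Prod.snd = (joint D S2 S1₀ i).B1 := by
  intro i
  induction i with
  | zero => intro _; exact ⟨rfl, rfl⟩
  | succ i ih =>
    intro hi
    obtain ⟨ih1, ih2⟩ := ih (by omega)
    have hC1 := (sim_main D S2 S1₀ lam hE0 hE1 hPIso (lam + 1) le_rfl).2.2.2.2.2
    have hmv : (S1f D S1₀ G1).move ((joint D S2 S1₀ i).B1) = pa1 D S2 S1₀ i :=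
      hC1 i (by omega)
    simp only [rounds, List.map_append, List.map_cons, List.map_nil]
    rw [ih2, hmv, ih1, ← pb1_def D S2 S1₀ i, joint_succ_A1, joint_succ_B1]
    exact ⟨rfl, rfl⟩

/-- The played rounds in `G0` match the simulation. -/
lemma rounds0_eq (lam : ℕ) (hE0 : 2 * lam + 2 ≤ G0.edgeSet.ncard)
    (hE1 : 2 * lam + 2 ≤ G1.edgeSet.ncard)
    (hPIso : PartialIso G0 G1 (joint D S2 S1₀ (lam + 1)).P) :
    ∀ i, i ≤ lam + 1 →
      (rounds S1₀.move (S2z D S2 G0).move i).map Prod.fst = (joint D S2 S1₀ i).A0 ∧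
      (rounds S1₀.move (S2z D S2 G0).move i).map Prod.snd = (joint D S2 S1₀ i).B0 := by
  intro i
  induction i with
  | zero => intro _; exact ⟨rfl, rfl⟩
  | succ i ih =>
    intro hi
    obtain ⟨ih1, ih2⟩ := ih (by omega)
    have hC2 := (sim_main D S2 S1₀ lam hE0 hE1 hPIso (lam + 1) le_rfl).2.2.2.2.1
    have hmv : (S2z D S2 G0).move ((joint D S2 S1₀ (i + 1)).A0) = pb0 D S2 S1₀ i :=
      hC2 i (by omega)
    simp only [rounds, List.map_append, List.map_cons, List.map_nil]
    rw [ih2, ← pa0_def D S2 S1₀ i, ih1, ← joint_succ_A0 D S2 S1₀ i, hmv, joint_succ_A0,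
      joint_succ_B0]
    exact ⟨rfl, rfl⟩

/-- transport of the isomorphism of played positions. -/
lemma isoAt_transfer (lam : ℕ) (hE0 : 2 * lam + 2 ≤ G0.edgeSet.ncard)
    (hE1 : 2 * lam + 2 ≤ G1.edgeSet.ncard)
    (hPIso : PartialIso G0 G1 (joint D S2 S1₀ (lam + 1)).P)
    {i : ℕ} (hi : i ≤ lam + 1)
    (hiso : isoAt (S1f D S1₀ G1).move S2.move i) :
    isoAt S1₀.move (S2z D S2 G0).move i := by
  rw [isoAt, (rounds1_eq D S2 S1₀ lam hE0 hE1 hPIso i hi).1,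
    (rounds1_eq D S2 S1₀ lam hE0 hE1 hPIso i hi).2] at hiso
  rw [isoAt, (rounds0_eq D S2 S1₀ lam hE0 hE1 hPIso i hi).1,
    (rounds0_eq D S2 S1₀ lam hE0 hE1 hPIso i hi).2]
  have hsim := sim_main D S2 S1₀ lam hE0 hE1 hPIso i hi
  set g : V0 → V1 := pf (joint D S2 S1₀ (lam + 1)).P with hg
  have hpairs : ∀ j, j < lam + 1 →
      pA D S2 S1₀ j ∈ (joint D S2 S1₀ (lam + 1)).P ∧
      qA D S2 S1₀ j ∈ (joint D S2 S1₀ (lam + 1)).P ∧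
      pB D S2 S1₀ j ∈ (joint D S2 S1₀ (lam + 1)).P ∧
      qB D S2 S1₀ j ∈ (joint D S2 S1₀ (lam + 1)).P := by
    intro j hj
    obtain ⟨w1, w2, w3, w4⟩ := pairs_mem_succ D S2 S1₀ j
    have hlift := (joint_P_prefix D S2 S1₀ (show j + 1 ≤ lam + 1 by omega)).subset
    exact ⟨hlift w1, hlift w2, hlift w3, hlift w4⟩
  have hgval : ∀ p ∈ (joint D S2 S1₀ (lam + 1)).P, g p.1 = p.2 := by
    intro p hp
    exact pf_eq hPIso (show (p.1, p.2) ∈ _ from by rwa [Prod.mk.eta])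
  -- the images of the G0-lists under g are the G1-lists
  have hmapA : (joint D S2 S1₀ i).A0.map (Sym2.map g) = (joint D S2 S1₀ i).A1 := by
    rw [joint_A0, joint_A1, List.map_map]
    apply List.map_congr_left
    intro j hj
    rw [List.mem_range] at hj
    have hj' : j < lam + 1 := by omega
    show Sym2.map g (pa0 D S2 S1₀ j) = pa1 D S2 S1₀ j
    rw [pa0_eq_pair, Sym2.map_pair_eq, hgval _ (hpairs j hj').1, hgval _ (hpairs j hj').2.1,
      ← pa1_def]
  have hmapB : (joint D S2 S1₀ i).B0.map (Sym2.map g) = (joint D S2 S1₀ i).B1 := by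
    rw [joint_B0, joint_B1, List.map_map]
    apply List.map_congr_left
    intro j hj
    rw [List.mem_range] at hj
    have hj' : j < lam + 1 := by omega
    show Sym2.map g (pb0 D S2 S1₀ j) = pb1 D S2 S1₀ j
    rw [pb0_def, Sym2.map_pair_eq, hgval _ (hpairs j hj').2.2.1,
      hgval _ (hpairs j hj').2.2.2, ← pb1_eq_pair]
  apply transfer g
  · intro e he
    exact G0.not_isDiag_of_mem_edgeSet (hsim.1 e he)
  · -- injectivity on the support
    have hdom : ∀ v ∈ suppL ((joint D S2 S1₀ i).A0 ++ (joint D S2 S1₀ i).B0),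
        ∃ p ∈ (joint D S2 S1₀ (lam + 1)).P, p.1 = v := by
      rintro v ⟨e, he, hv⟩
      rcases List.mem_append.mp he with h | h
      · obtain ⟨j, hj, rfl⟩ := (mem_A0 D S2 S1₀).mp h
        rw [pa0_eq_pair, Sym2.mem_iff] at hv
        rcases hv with rfl | rfl
        · exact ⟨pA D S2 S1₀ j, (hpairs j (by omega)).1, rfl⟩
        · exact ⟨qA D S2 S1₀ j, (hpairs j (by omega)).2.1, rfl⟩
      · obtain ⟨j, hj, rfl⟩ := (mem_B0 D S2 S1₀).mp h
        rw [pb0_def, Sym2.mem_iff] at hv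
        rcases hv with rfl | rfl
        · exact ⟨pB D S2 S1₀ j, (hpairs j (by omega)).2.2.1, rfl⟩
        · exact ⟨qB D S2 S1₀ j, (hpairs j (by omega)).2.2.2, rfl⟩
    intro x hx y hy hxy
    obtain ⟨p, hp, hp1⟩ := hdom x hx
    obtain ⟨q, hq, hq1⟩ := hdom y hy
    subst hp1; subst hq1
    rw [hgval p hp, hgval q hq] at hxy
    exact ((hPIso p hp q hq).1).mpr hxy
  · rw [hmapA, hmapB]
    exact hiso

end Sim


section Final
variable {V0 V1 : Type*}

lemma count_transfer [Fintype V0] [Fintype V1] [Nonempty V0] [Nonempty V1]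
    {G0 : SimpleGraph V0} {G1 : SimpleGraph V1} {m : ℕ}
    (hw : DuplicatorWins G0 G1 (2 * m)) (h1 : m ≤ G1.edgeSet.ncard) :
    m ≤ G0.edgeSet.ncard := by
  classical
  obtain ⟨D, hD⟩ := hw
  obtain ⟨t, hts, htm⟩ := Set.exists_subset_card_eq h1
  have htfin : t.Finite := Set.toFinite t
  set lst := htfin.toFinset.toList with hlst
  have hnd : lst.Nodup := Finset.nodup_toList _
  have hlen : lst.length = m := by
    rw [hlst, Finset.length_toList, ← Set.ncard_eq_toFinset_card _ htfin, htm]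
  have hsub : ∀ e ∈ lst, e ∈ G1.edgeSet := by
    intro e he
    apply hts
    rwa [hlst, Finset.mem_toList, Set.Finite.mem_toFinset] at he
  set σ' : List (V0 × V1) → V0 ⊕ V1 := fun L =>
    if L.length % 2 = 0 then Sum.inr (lst.getD (L.length / 2) Classical.ofNonempty).out.1
    else Sum.inr (lst.getD (L.length / 2) Classical.ofNonempty).out.2 with hσ
  have hP := hD σ'
  have hpair : ∀ j, j < m →
      ∃ p q, p ∈ efRounds D σ' (2 * m) ∧ q ∈ efRounds D σ' (2 * m) ∧
        p.2 = (lst.getD j Classical.ofNonempty).out.1 ∧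
        q.2 = (lst.getD j Classical.ofNonempty).out.2 := by
    intro j hj
    refine ⟨D.resp (efRounds D σ' (2 * j)) (σ' (efRounds D σ' (2 * j))),
      D.resp (efRounds D σ' (2 * j + 1)) (σ' (efRounds D σ' (2 * j + 1))), ?_, ?_, ?_, ?_⟩
    · have : D.resp (efRounds D σ' (2 * j)) (σ' (efRounds D σ' (2 * j)))
          ∈ efRounds D σ' (2 * j + 1) := by
        show _ ∈ efRounds D σ' (2 * j) ++ [_]
        simp
      exact (efRounds_prefix D σ' (show 2 * j + 1 ≤ 2 * m by omega)).subset this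
    · have : D.resp (efRounds D σ' (2 * j + 1)) (σ' (efRounds D σ' (2 * j + 1)))
          ∈ efRounds D σ' (2 * j + 1 + 1) := by
        show _ ∈ efRounds D σ' (2 * j + 1) ++ [_]
        simp
      exact (efRounds_prefix D σ' (show 2 * j + 1 + 1 ≤ 2 * m by omega)).subset this
    · have hlc : σ' (efRounds D σ' (2 * j))
          = Sum.inr (lst.getD j Classical.ofNonempty).out.1 := by
        rw [hσ]
        simp only [efRounds_length]
        rw [if_pos (show 2 * j % 2 = 0 by omega), show 2 * j / 2 = j by omega]
      rw [hlc, D.resp_right]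
    · have hlc : σ' (efRounds D σ' (2 * j + 1))
          = Sum.inr (lst.getD j Classical.ofNonempty).out.2 := by
        rw [hσ]
        simp only [efRounds_length]
        rw [if_neg (show ¬(2 * j + 1) % 2 = 0 by omega), show (2 * j + 1) / 2 = j by omega]
      rw [hlc, D.resp_right]
  choose pfn qfn hp hq hp2 hq2 using hpair
  set f : ℕ → Sym2 V0 := fun j =>
    if hj : j < m then s((pfn j hj).1, (qfn j hj).1) else Classical.ofNonempty with hf
  have hfE : ∀ j, j < m → f j ∈ G0.edgeSet := by
    intro j hj
    rw [hf]; simp only [dif_pos hj]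
    rw [SimpleGraph.mem_edgeSet]
    apply ((hP _ (hp j hj) _ (hq j hj)).2).mpr
    rw [hp2 j hj, hq2 j hj]
    apply adj_out
    apply hsub
    have hjl : j < lst.length := by omega
    rw [List.getD_eq_getElem lst _ hjl]
    exact List.getElem_mem _
  have hinj : ∀ j, j < m → ∀ k, k < m → f j = f k → j = k := by
    intro j hj k hk hjk
    rw [hf] at hjk; simp only [dif_pos hj, dif_pos hk] at hjk
    have := sym2_fst_to_snd hP (hp j hj) (hq j hj) (hp k hk) (hq k hk) hjk
    rw [hp2 j hj, hq2 j hj, hp2 k hk, hq2 k hk, mk_out, mk_out] at this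
    have hjl : j < lst.length := by omega
    have hkl : k < lst.length := by omega
    rw [List.getD_eq_getElem lst _ hjl, List.getD_eq_getElem lst _ hkl] at this
    exact (List.Nodup.getElem_inj_iff hnd).mp this
  have himg : (Finset.range m).image f ⊆ G0.edgeSet.toFinset := by
    intro e he
    rw [Finset.mem_image] at he
    obtain ⟨j, hj, rfl⟩ := he
    rw [Finset.mem_range] at hj
    rw [Set.mem_toFinset]
    exact hfE j hj
  have hcard : ((Finset.range m).image f).card = m := by
    rw [Finset.card_image_of_injOn, Finset.card_range]
    intro j hj k hk
    rw [Finset.mem_coe, Finset.mem_range] at hj hk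
    exact hinj j hj k hk
  calc m = ((Finset.range m).image f).card := hcard.symm
    _ ≤ G0.edgeSet.toFinset.card := Finset.card_le_card himg
    _ = G0.edgeSet.ncard := (Set.ncard_eq_toFinset_card' _).symm

end Final

lemma symLen_le_half {V : Type*} [Fintype V] (G : SimpleGraph V) :
    symLen G ≤ G.edgeSet.ncard / 2 := by
  rcases isEmpty_or_nonempty (BStrategy G) with hE | hNE
  · rw [symLen, ciSup_of_empty]
    exact bot_le
  · apply ciSup_le
    intro S2
    rcases isEmpty_or_nonempty (AStrategy G) with hA | hA
    · rw [iInf, Set.range_eq_empty, Nat.sInf_empty]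
      exact Nat.zero_le _
    · exact le_trans (ciInf_le (OrderBot.bddBelow _) Classical.ofNonempty)
        (playLength_le_half _ _ _)


/-- If `l_EF(G0,G1) ≥ 4·λ(G0) + 4`, then `λ(G1) ≤ λ(G0)`. -/
theorem statement15 {V0 V1 : Type*} [Fintype V0] [Fintype V1]
    (G0 : SimpleGraph V0) (G1 : SimpleGraph V1)
    (h : ((4 * symLen G0 + 4 : ℕ) : ℕ∞) ≤ lEF G0 G1) :
    symLen G1 ≤ symLen G0 := by
    classical
  rcases isEmpty_or_nonempty V1 with hV1 | hV1
  · -- no vertices on the right: `symLen G1 = 0`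
    have hemp : IsEmpty (Sym2 V1) := ⟨fun e => hV1.false e.out.1⟩
    have : IsEmpty (BStrategy G1) := ⟨fun S => hemp.false (S.move [])⟩
    rw [symLen, ciSup_of_empty]
    exact bot_le
  · set lam := symLen G0 with hlam
    have hw : DuplicatorWins G0 G1 (4 * lam + 4) := wins_of_le_lEF (by omega) h
    obtain ⟨D, hD⟩ := hw
    haveI hV0 : Nonempty V0 := ⟨(D.resp [] (Sum.inr Classical.ofNonempty)).1⟩
    rcases Nat.lt_or_ge (G1.edgeSet.ncard / 2) (lam + 1) with hsmall | hbig
    · exact (symLen_le_half G1).trans (by omega)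
    · have hE1 : 2 * lam + 2 ≤ G1.edgeSet.ncard := by omega
      have hw' : DuplicatorWins G0 G1 (2 * (2 * lam + 2)) := by
        rw [show 2 * (2 * lam + 2) = 4 * lam + 4 by omega]
        exact ⟨D, hD⟩
      have hE0 : 2 * lam + 2 ≤ G0.edgeSet.ncard := count_transfer hw' hE1
      rw [symLen]
      apply ciSup_le
      intro S2
      -- bound for the choice of an optimal strategy for A in `G0`
      have hbdd : BddAbove (Set.range fun S2' : BStrategy G0 =>
          ⨅ S1' : AStrategy G0, playLength G0 S1'.move S2'.move) := by
        refine ⟨G0.edgeSet.ncard / 2, ?_⟩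
        rintro x ⟨S2', rfl⟩
        exact le_trans (ciInf_le (OrderBot.bddBelow _) Classical.ofNonempty)
          (playLength_le_half _ _ _)
      obtain ⟨S1₀, hS1₀⟩ : ∃ S1₀ : AStrategy G0,
          playLength G0 S1₀.move (S2z D S2 G0).move ≤ lam := by
        have hne : (Set.range fun S1' : AStrategy G0 =>
            playLength G0 S1'.move (S2z D S2 G0).move).Nonempty := Set.range_nonempty _
        obtain ⟨S1₀, hS⟩ := Nat.sInf_mem hne
        refine ⟨S1₀, ?_⟩
        have hS' : playLength G0 S1₀.move (S2z D S2 G0).move = sInf (Set.range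
            fun S1' : AStrategy G0 => playLength G0 S1'.move (S2z D S2 G0).move) := hS
        rw [hS']
        have h2 : sInf (Set.range fun S1' : AStrategy G0 =>
            playLength G0 S1'.move (S2z D S2 G0).move)
            = ⨅ S1' : AStrategy G0, playLength G0 S1'.move (S2z D S2 G0).move := rfl
        rw [h2, hlam, symLen]
        exact le_ciSup hbdd (S2z D S2 G0)
      apply ciInf_le_of_le (OrderBot.bddBelow _) (S1f D S1₀ G1)
      by_contra hc
      push_neg at hc
      have hge : lam + 1 ≤ playLength G1 (S1f D S1₀ G1).move S2.move := hc
      have hall1 := isoAt_of_le_playLength hge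
      have hPIso : PartialIso G0 G1 (joint D S2 S1₀ (lam + 1)).P := by
        have hh := hD (sigmaC D S2 S1₀)
        rw [show (4 * lam + 4) = 4 * (lam + 1) by omega] at hh
        rwa [ef_match] at hh
      have hall0 : ∀ i ≤ lam + 1, isoAt S1₀.move (S2z D S2 G0).move i :=
        fun i hi => isoAt_transfer D S2 S1₀ lam hE0 hE1 hPIso hi (hall1 i hi)
      have hle := le_playLength (G := G0) (S1 := S1₀.move) (S2 := (S2z D S2 G0).move)
        (show lam + 1 ≤ G0.edgeSet.ncard / 2 by omega) hall0
      omega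

end SymPaper
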